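/- Let λ₁ > 0, λ₂ > 0, α > 0 and θ ∈ [-1, 1], and for z, y > 0 let f_{Z,Y}(z,y) = λ₁λ₂ z e^{-(λ₁+λ₂y)z}(1 + θ(1 - 2e^{-λ₁z})(1 - 2e^{-λ₂yz})). Then for every z > 0, ∫₀^α f_{Z,Y}(z,y) dy = λ₁[(1+θ)e^{-λ₁z}(1 - e^{-λ₂αz}) - θe^{-λ₁z}(1 - e^{-2λ₂αz}) - 2θe^{-2λ₁z}(1 - e^{-λ₂αz}) + 2θe^{-2λ₁z}(1 - e^{-2λ₂αz})]. -/

import Mathlib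

/-! For fixed `z`, expanding `1 - 2 e^{-l₂ y z}` writes the density, as a function of `y`, as a
linear combination of `e^{-c y}` and `e^{-2 c y}` with `c = l₂ z`; both integrate in closed form
over `[0, α]`. -/

open MeasureTheory Real

theorem integral_exp_mul {c : ℝ} (hc : c ≠ 0) (a b : ℝ) :
    ∫ x in a..b, exp (c * x) = (exp (c * b) - exp (c * a)) / c := by
  rw [intervalIntegral.integral_comp_mul_left (fun x => exp x) hc, integral_exp, smul_eq_mul,
    inv_mul_eq_div]

theorem gwed_density_eq_exp_combination (l₁ l₂ θ z y : ℝ) :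
    l₁ * l₂ * z * exp (-(l₁ + l₂ * y) * z)
        * (1 + θ * (1 - 2 * exp (-l₁ * z)) * (1 - 2 * exp (-l₂ * y * z)))
      = l₁ * (l₂ * z) * exp (-l₁ * z) * (1 + θ * (1 - 2 * exp (-l₁ * z)))
            * exp (-(l₂ * z) * y)
        - 2 * l₁ * (l₂ * z) * θ * exp (-l₁ * z) * (1 - 2 * exp (-l₁ * z))
            * exp (-(2 * (l₂ * z)) * y) := by
  have h₁ : exp (-(l₁ + l₂ * y) * z) = exp (-l₁ * z) * exp (-(l₂ * z) * y) := by
    rw [← exp_add]; ring_nf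
  have h₂ : exp (-l₂ * y * z) = exp (-(l₂ * z) * y) := by ring_nf
  have h₃ : exp (-(2 * (l₂ * z)) * y) = exp (-(l₂ * z) * y) ^ 2 := by
    rw [← exp_nat_mul]; ring_nf
  rw [h₁, h₂, h₃]
  ring

theorem gwed_hidden_truncation_inner_integral
    (l₁ l₂ α θ : ℝ) (hl₂ : 0 < l₂) (hα : 0 < α)
    (f : ℝ → ℝ → ℝ)
    (hf : ∀ z y : ℝ, 0 < z → 0 < y →
      f z y = l₁ * l₂ * z * Real.exp (-(l₁ + l₂ * y) * z)
        * (1 + θ * (1 - 2 * Real.exp (-l₁ * z)) * (1 - 2 * Real.exp (-l₂ * y * z)))) :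
    ∀ z : ℝ, 0 < z →
      (∫ y in (0 : ℝ)..α, f z y)
        = l₁ * ((1 + θ) * Real.exp (-l₁ * z) * (1 - Real.exp (-l₂ * α * z))
            - θ * Real.exp (-l₁ * z) * (1 - Real.exp (-2 * l₂ * α * z))
            - 2 * θ * Real.exp (-2 * l₁ * z) * (1 - Real.exp (-l₂ * α * z))
            + 2 * θ * Real.exp (-2 * l₁ * z) * (1 - Real.exp (-2 * l₂ * α * z))) := by
  intro z hz
  have hc : l₂ * z ≠ 0 := (mul_pos hl₂ hz).ne'
  set c := l₂ * z
  set E := exp (-l₁ * z)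
  have hf_split : ∀ᵐ y, y ∈ Set.uIoc 0 α → f z y =
      l₁ * c * E * (1 + θ * (1 - 2 * E)) * exp (-c * y)
        - 2 * l₁ * c * θ * E * (1 - 2 * E) * exp (-(2 * c) * y) :=
    Filter.Eventually.of_forall fun y hy => by
      rw [Set.uIoc_of_le hα.le] at hy
      rw [hf z y hz hy.1, gwed_density_eq_exp_combination]
  have hexp_integrable : ∀ k : ℝ, IntervalIntegrable (fun y => exp (k * y)) volume 0 α := fun k =>
    (continuous_exp.comp (continuous_const.mul continuous_id)).intervalIntegrable _ _
  rw [intervalIntegral.integral_congr_ae hf_split, intervalIntegral.integral_sub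
      ((hexp_integrable _).const_mul _) ((hexp_integrable _).const_mul _),
    intervalIntegral.integral_const_mul, intervalIntegral.integral_const_mul,
    integral_exp_mul (neg_ne_zero.mpr hc), integral_exp_mul (by simpa using hc)]
  have hE₂ : exp (-2 * l₁ * z) = E ^ 2 := by rw [← exp_nat_mul]; ring_nf
  have hα₁ : exp (-c * α) = exp (-l₂ * α * z) := by simp only [c]; ring_nf
  have hα₂ : exp (-(2 * c) * α) = exp (-2 * l₂ * α * z) := by simp only [c]; ring_nf
  simp only [hE₂, hα₁, hα₂, mul_zero, exp_zero]
  field_simp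
  ring
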